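/- arXiv:1502.00369 — 3 statements merged into one kernel-verified Lean document; each statement's English description precedes it below -/
import Mathlib

section
/- Every order interval in a Banach lattice is an almost Dunford-Pettis set. -/
open Filter Topology Pointwise

variable {E F G X : Type*}

section Defs

variable [NormedAddCommGroup E] [Lattice E] [HasSolidNorm E] [IsOrderedAddMonoid E] [NormedSpace ℝ E]

/-- `|f|` of a functional evaluated at `x ≥ 0`: `sup {f y : |y| ≤ x}`. -/
noncomputable def absEval (f : E →L[ℝ] ℝ) (x : E) : ℝ :=
  ⨆ y : {y : E // |y| ≤ x}, f y.1

/-- `|f| ⊓ |g| = 0` in the dual lattice, via the Riesz-Kantorovich formula. -/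
def DisjointPair (f g : E →L[ℝ] ℝ) : Prop :=
  ∀ x : E, 0 ≤ x →
    (⨅ y : {y : E // 0 ≤ y ∧ y ≤ x}, (absEval f y.1 + absEval g (x - y.1))) = 0

/-- A pairwise disjoint sequence of functionals. -/
def DisjointSeqDual (f : ℕ → E →L[ℝ] ℝ) : Prop :=
  ∀ n m, n ≠ m → DisjointPair (f n) (f m)

/-- A weakly null sequence in a normed space. -/
def WeaklyNullSeq {Y : Type*} [NormedAddCommGroup Y] [NormedSpace ℝ Y] (y : ℕ → Y) : Prop :=
  ∀ φ : Y →L[ℝ] ℝ, Tendsto (fun n => φ (y n)) atTop (𝓝 0)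

/-- An almost Dunford-Pettis set: disjoint weakly null sequences in the dual converge
uniformly to zero on it. -/
def AlmostDPSet (A : Set E) : Prop :=
  ∀ f : ℕ → E →L[ℝ] ℝ, DisjointSeqDual f → WeaklyNullSeq f →
    Tendsto (fun n => ⨆ a : A, |f n a.1|) atTop (𝓝 0)

end Defs

/-!
On `[x, y]` we have `|f a| ≤ |f x| + |f|(y - x)`, where `|f|(u) = absEval f u`, so it suffices that
`|fₙ|(u) → 0` for a disjoint weakly null sequence. By the Riesz decomposition property
`f ↦ |f|(u)` is additive on disjoint functionals, so `|g|(u) ≥ ε` for every convex combination `g`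
of the `fₙ` with `|fₙ|(u) ≥ ε`. As `f ↦ |f|(u)` is continuous, `0` is not in the closed convex hull
of those `fₙ`, and a functional separating it from `0` contradicts `fₙ → 0` weakly (Mazur).
-/

section AbsEval

variable [NormedAddCommGroup E] [Lattice E] [HasSolidNorm E] [IsOrderedAddMonoid E]
  [NormedSpace ℝ E]

omit [IsOrderedAddMonoid E] in
theorem le_absEval (f : E →L[ℝ] ℝ) {v a : E} (h : |v| ≤ a) : f v ≤ absEval f a := by
  refine le_ciSup (f := fun y : {y : E // |y| ≤ a} => f y.1) ⟨‖f‖ * ‖a‖, ?_⟩ ⟨v, h⟩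
  rintro _ ⟨⟨w, hw⟩, rfl⟩
  exact (le_abs_self _).trans <| f.le_opNorm_of_le
    (norm_le_norm_of_abs_le_abs (hw.trans (le_abs_self a)))

omit [IsOrderedAddMonoid E] in
theorem abs_apply_le_absEval (f : E →L[ℝ] ℝ) {v a : E} (h : |v| ≤ a) : |f v| ≤ absEval f a := by
  have := le_absEval f (show |-v| ≤ a by rwa [abs_neg])
  rw [map_neg] at this
  exact abs_le.2 ⟨by linarith, le_absEval f h⟩

theorem absEval_nonneg (f : E →L[ℝ] ℝ) {a : E} (ha : 0 ≤ a) : 0 ≤ absEval f a := by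
  simpa using le_absEval f (show |(0 : E)| ≤ a by simpa using ha)

omit [HasSolidNorm E] in
theorem exists_lt_apply_of_lt_absEval (f : E →L[ℝ] ℝ) {a : E} (ha : 0 ≤ a) {r : ℝ}
    (hr : r < absEval f a) : ∃ v, |v| ≤ a ∧ r < f v := by
  have : Nonempty {y : E // |y| ≤ a} := ⟨⟨0, by simpa using ha⟩⟩
  obtain ⟨⟨v, hv⟩, hlt⟩ := exists_lt_of_lt_ciSup hr
  exact ⟨v, hv, hlt⟩

omit [IsOrderedAddMonoid E] in
theorem absEval_le_norm_mul_norm (f : E →L[ℝ] ℝ) (a : E) : absEval f a ≤ ‖f‖ * ‖a‖ :=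
  Real.iSup_le (fun ⟨_, hv⟩ => (le_abs_self _).trans <| f.le_opNorm_of_le
    (norm_le_norm_of_abs_le_abs (hv.trans (le_abs_self a)))) (by positivity)

omit [HasSolidNorm E] [IsOrderedAddMonoid E] in
@[simp]
theorem absEval_zero_left (a : E) : absEval (0 : E →L[ℝ] ℝ) a = 0 := by
  simp [absEval]

@[simp]
theorem absEval_zero_right (f : E →L[ℝ] ℝ) : absEval f (0 : E) = 0 :=
  le_antisymm (by simpa using absEval_le_norm_mul_norm f 0) (absEval_nonneg f le_rfl)

theorem absEval_mono (f : E →L[ℝ] ℝ) {a b : E} (hb : 0 ≤ b) (hab : a ≤ b) :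
    absEval f a ≤ absEval f b :=
  Real.iSup_le (fun v => le_absEval f (v.2.trans hab)) (absEval_nonneg f hb)

omit [HasSolidNorm E] [IsOrderedAddMonoid E] in
theorem absEval_smul (f : E →L[ℝ] ℝ) {c : ℝ} (hc : 0 ≤ c) (a : E) :
    absEval (c • f) a = c * absEval f a := by
  simp [absEval, Real.mul_iSup_of_nonneg hc]

theorem absEval_add_le (f g : E →L[ℝ] ℝ) {a : E} (ha : 0 ≤ a) :
    absEval (f + g) a ≤ absEval f a + absEval g a :=
  Real.iSup_le (fun v => add_le_add (le_absEval f v.2) (le_absEval g v.2))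
    (add_nonneg (absEval_nonneg f ha) (absEval_nonneg g ha))

omit [NormedSpace ℝ E] [HasSolidNorm E] in
/-- The Riesz decomposition property, realised by truncating `v` at `±a`. -/
theorem exists_abs_le_abs_sub_le {v a b : E} (ha : 0 ≤ a) (hb : 0 ≤ b) (hv : |v| ≤ a + b) :
    ∃ t, |t| ≤ a ∧ |v - t| ≤ b := by
  refine ⟨(v ⊓ a) ⊔ -a, abs_le'.2 ⟨sup_le inf_le_right (neg_le_self ha), neg_le.1 le_sup_right⟩,
    abs_le'.2 ⟨?_, ?_⟩⟩
  · calc v - (v ⊓ a) ⊔ -a ≤ v - v ⊓ a := sub_le_sub_left le_sup_left v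
      _ = 0 ⊔ (v - a) := by rw [sub_inf, sub_self]
      _ ≤ b := sup_le hb (sub_le_iff_le_add'.2 ((le_abs_self v).trans hv))
  · calc -(v - (v ⊓ a) ⊔ -a) = (v ⊓ a - v) ⊔ (-a - v) := by rw [neg_sub, sup_sub]
      _ ≤ b := sup_le ((sub_nonpos.2 inf_le_left).trans hb)
          (by rw [sub_le_iff_le_add', neg_le]; simpa [add_comm] using (neg_le_abs v).trans hv)

theorem absEval_add_le_of_nonneg (f : E →L[ℝ] ℝ) {a b : E} (ha : 0 ≤ a) (hb : 0 ≤ b) :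
    absEval f (a + b) ≤ absEval f a + absEval f b := by
  refine Real.iSup_le (fun ⟨v, hv⟩ => ?_) (add_nonneg (absEval_nonneg f ha) (absEval_nonneg f hb))
  obtain ⟨t, ht, hvt⟩ := exists_abs_le_abs_sub_le ha hb hv
  calc f v = f t + f (v - t) := by rw [← map_add, add_sub_cancel]
    _ ≤ absEval f a + absEval f b := add_le_add (le_absEval f ht) (le_absEval f hvt)

theorem absEval_le_add_norm_sub_mul (f g : E →L[ℝ] ℝ) {a : E} (ha : 0 ≤ a) :
    absEval f a ≤ absEval g a + ‖f - g‖ * ‖a‖ :=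
  calc absEval f a = absEval (g + (f - g)) a := by rw [add_sub_cancel]
    _ ≤ absEval g a + ‖f - g‖ * ‖a‖ :=
      (absEval_add_le g (f - g) ha).trans (add_le_add_right (absEval_le_norm_mul_norm _ _) _)

theorem continuous_absEval {a : E} (ha : 0 ≤ a) :
    Continuous fun f : E →L[ℝ] ℝ => absEval f a :=
  (LipschitzWith.of_le_add_mul ‖a‖₊ fun f g => by
    simpa [dist_eq_norm, mul_comm] using absEval_le_add_norm_sub_mul f g ha).continuous

theorem abs_apply_le_of_mem_Icc (f : E →L[ℝ] ℝ) {x y a : E} (ha : a ∈ Set.Icc x y) :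
    |f a| ≤ |f x| + absEval f (y - x) := by
  have hax : |a - x| ≤ y - x := by
    rw [abs_of_nonneg (sub_nonneg.2 ha.1)]
    exact sub_le_sub_right ha.2 x
  calc |f a| = |f x + f (a - x)| := by rw [← map_add, add_sub_cancel]
    _ ≤ |f x| + absEval f (y - x) :=
      (abs_add_le _ _).trans (add_le_add_right (abs_apply_le_absEval f hax) _)

end AbsEval

section Disjoint

variable [NormedAddCommGroup E] [Lattice E] [HasSolidNorm E] [IsOrderedAddMonoid E]
  [NormedSpace ℝ E] {f g : E →L[ℝ] ℝ}

theorem disjointPair_iff : DisjointPair f g ↔ ∀ u : E, 0 ≤ u → ∀ ε > 0,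
    ∃ z, 0 ≤ z ∧ z ≤ u ∧ absEval f z + absEval g (u - z) < ε := by
  refine forall_congr' fun u => ⟨fun h hu ε hε => ?_, fun h hu => ?_⟩
  · have : Nonempty {z : E // 0 ≤ z ∧ z ≤ u} := ⟨⟨0, le_rfl, hu⟩⟩
    obtain ⟨⟨z, hz, hzu⟩, hlt⟩ := exists_lt_of_ciInf_lt ((h hu).trans_lt hε)
    exact ⟨z, hz, hzu, hlt⟩
  · have hnonneg (z : {z : E // 0 ≤ z ∧ z ≤ u}) : 0 ≤ absEval f z.1 + absEval g (u - z.1) :=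
      add_nonneg (absEval_nonneg f z.2.1) (absEval_nonneg g (sub_nonneg.2 z.2.2))
    have : Nonempty {z : E // 0 ≤ z ∧ z ≤ u} := ⟨⟨0, le_rfl, hu⟩⟩
    refine le_antisymm (le_of_forall_pos_lt_add fun ε hε => ?_) (le_ciInf hnonneg)
    obtain ⟨z, hz, hzu, hzε⟩ := h hu ε hε
    exact (ciInf_le ⟨0, Set.forall_mem_range.2 hnonneg⟩ ⟨z, hz, hzu⟩).trans_lt (by simpa using hzε)

theorem disjointPair_zero_right (f : E →L[ℝ] ℝ) : DisjointPair f 0 :=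
  disjointPair_iff.2 fun u hu ε hε => ⟨0, le_rfl, hu, by simpa using hε⟩

theorem DisjointPair.add_right {g₁ g₂ : E →L[ℝ] ℝ} (h₁ : DisjointPair f g₁)
    (h₂ : DisjointPair f g₂) : DisjointPair f (g₁ + g₂) := by
  rw [disjointPair_iff] at *
  intro u hu ε hε
  obtain ⟨z₁, hz₁, hz₁u, hε₁⟩ := h₁ u hu (ε / 2) (half_pos hε)
  obtain ⟨z₂, hz₂, hz₂u, hε₂⟩ := h₂ u hu (ε / 2) (half_pos hε)
  have hz : 0 ≤ u - z₁ ⊔ z₂ := sub_nonneg.2 (sup_le hz₁u hz₂u)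
  have hf : absEval f (z₁ ⊔ z₂) ≤ absEval f z₁ + absEval f z₂ :=
    (absEval_mono f (add_nonneg hz₁ hz₂)
      (sup_le (le_add_of_nonneg_right hz₂) (le_add_of_nonneg_left hz₁))).trans
      (absEval_add_le_of_nonneg f hz₁ hz₂)
  have hg : absEval (g₁ + g₂) (u - z₁ ⊔ z₂) ≤ absEval g₁ (u - z₁) + absEval g₂ (u - z₂) :=
    (absEval_add_le g₁ g₂ hz).trans <| add_le_add
      (absEval_mono g₁ (sub_nonneg.2 hz₁u) (sub_le_sub_left le_sup_left u))
      (absEval_mono g₂ (sub_nonneg.2 hz₂u) (sub_le_sub_left le_sup_right u))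
  exact ⟨z₁ ⊔ z₂, le_sup_of_le_left hz₁, sup_le hz₁u hz₂u, by linarith⟩

theorem DisjointPair.sum_right {ι : Type*} {s : Finset ι} {g : ι → E →L[ℝ] ℝ}
    (h : ∀ i ∈ s, DisjointPair f (g i)) : DisjointPair f (∑ i ∈ s, g i) :=
  Finset.sum_induction g (DisjointPair f) (fun _ _ => DisjointPair.add_right)
    (disjointPair_zero_right f) h

theorem DisjointPair.smul (h : DisjointPair f g) {a b : ℝ} (ha : 0 ≤ a) (hb : 0 ≤ b) :
    DisjointPair (a • f) (b • g) := by
  rw [disjointPair_iff] at h ⊢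
  intro u hu ε hε
  obtain ⟨z, hz, hzu, hzε⟩ := h u hu (ε / (a + b + 1)) (by positivity)
  refine ⟨z, hz, hzu, ?_⟩
  have hF := absEval_nonneg f hz
  have hG := absEval_nonneg g (sub_nonneg.2 hzu)
  rw [absEval_smul f ha, absEval_smul g hb]
  calc a * absEval f z + b * absEval g (u - z)
      ≤ (a + b + 1) * (absEval f z + absEval g (u - z)) := by nlinarith
    _ < (a + b + 1) * (ε / (a + b + 1)) := by gcongr
    _ = ε := by field_simp

theorem absEval_add_of_disjointPair (h : DisjointPair f g) {u : E} (hu : 0 ≤ u) :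
    absEval (f + g) u = absEval f u + absEval g u := by
  refine le_antisymm (absEval_add_le f g hu) (le_of_forall_pos_lt_add fun ε hε => ?_)
  obtain ⟨z, hz, hzu, hzε⟩ := disjointPair_iff.1 h u hu (ε / 4) (by positivity)
  have hw : 0 ≤ u - z := sub_nonneg.2 hzu
  obtain ⟨v₁, hv₁, hfv₁⟩ :=
    exists_lt_apply_of_lt_absEval f hw (sub_lt_self _ (by positivity : 0 < ε / 4))
  obtain ⟨v₂, hv₂, hgv₂⟩ :=
    exists_lt_apply_of_lt_absEval g hz (sub_lt_self _ (by positivity : 0 < ε / 4))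
  have hv : |v₁ + v₂| ≤ u :=
    (abs_add_le v₁ v₂).trans (by simpa using add_le_add hv₁ hv₂)
  have hfu : absEval f u ≤ absEval f (u - z) + absEval f z := by
    simpa using absEval_add_le_of_nonneg f hw hz
  have hgu : absEval g u ≤ absEval g z + absEval g (u - z) := by
    simpa using absEval_add_le_of_nonneg g hz hw
  have hfg := le_absEval (f + g) hv
  simp only [add_apply, map_add] at hfg
  linarith [abs_le.1 (abs_apply_le_absEval f hv₂), abs_le.1 (abs_apply_le_absEval g hv₁)]

theorem absEval_sum_of_pairwise {ι : Type*} (s : Finset ι) (g : ι → E →L[ℝ] ℝ)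
    (hg : (s : Set ι).Pairwise fun i j => DisjointPair (g i) (g j)) {u : E} (hu : 0 ≤ u) :
    absEval (∑ i ∈ s, g i) u = ∑ i ∈ s, absEval (g i) u := by
  induction s using Finset.cons_induction with
  | empty => simp
  | cons i s hi ih =>
    have hdisj : DisjointPair (g i) (∑ j ∈ s, g j) := DisjointPair.sum_right fun j hj =>
      hg (Finset.mem_cons_self i s) (Finset.mem_cons_of_mem hj) (ne_of_mem_of_not_mem hj hi).symm
    rw [Finset.sum_cons, Finset.sum_cons, absEval_add_of_disjointPair hdisj hu,
      ih (hg.mono (Finset.coe_subset.2 (Finset.subset_cons hi)))]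

theorem le_absEval_of_mem_convexHull {ι : Type*} {g : ι → E →L[ℝ] ℝ}
    (hg : Pairwise fun i j => DisjointPair (g i) (g j)) {u : E} (hu : 0 ≤ u) {ε : ℝ}
    (hε : ∀ i, ε ≤ absEval (g i) u) {h : E →L[ℝ] ℝ} (hh : h ∈ convexHull ℝ (Set.range g)) :
    ε ≤ absEval h u := by
  rw [convexHull_range_eq_exists_affineCombination] at hh
  obtain ⟨s, w, hw0, hw1, rfl⟩ := hh
  rw [s.affineCombination_eq_linear_combination g w hw1, absEval_sum_of_pairwise s _
    (fun i hi j hj hij => (hg hij).smul (hw0 i hi) (hw0 j hj)) hu]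
  calc ε = ∑ i ∈ s, w i * ε := by rw [← Finset.sum_mul, hw1, one_mul]
    _ ≤ ∑ i ∈ s, absEval (w i • g i) u := Finset.sum_le_sum fun i hi => by
      rw [absEval_smul _ (hw0 i hi)]
      exact mul_le_mul_of_nonneg_left (hε i) (hw0 i hi)

theorem tendsto_absEval_of_disjoint_weaklyNull {f : ℕ → E →L[ℝ] ℝ} (hd : DisjointSeqDual f)
    (hw : WeaklyNullSeq f) {u : E} (hu : 0 ≤ u) :
    Tendsto (fun n => absEval (f n) u) atTop (𝓝 0) := by
  refine tendsto_order.2 ⟨fun a ha => Eventually.of_forall fun n =>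
    ha.trans_le (absEval_nonneg _ hu), fun ε hε => ?_⟩
  by_contra hfreq
  simp only [not_eventually, not_lt] at hfreq
  set K := closure (convexHull ℝ (Set.range fun n : {n // ε ≤ absEval (f n) u} => f n))
  have hK : ∀ g ∈ K, ε ≤ absEval g u :=
    closure_minimal (fun g hg => le_absEval_of_mem_convexHull (ι := {n // ε ≤ absEval (f n) u})
      (fun i j hij => hd i j (Subtype.coe_injective.ne hij)) hu (fun n => n.2) hg)
      (isClosed_le continuous_const (continuous_absEval hu))
  have h0 : (0 : E →L[ℝ] ℝ) ∉ K := fun h => by linarith [hK 0 h, absEval_zero_left u]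
  obtain ⟨φ, r, hφK, hr⟩ :=
    geometric_hahn_banach_closed_point (convex_convexHull ℝ _).closure isClosed_closure h0
  rw [map_zero] at hr
  obtain ⟨n, hn, hφn⟩ :=
    (hfreq.and_eventually ((hw φ).eventually (eventually_gt_nhds hr))).exists
  exact (hφK _ (subset_closure (subset_convexHull ℝ _ ⟨⟨n, hn⟩, rfl⟩))).not_gt hφn

end Disjoint

theorem orderInterval_almostDP_general [NormedAddCommGroup E] [Lattice E] [HasSolidNorm E] [IsOrderedAddMonoid E] [NormedSpace ℝ E]
    (x y : E) (hxy : x ≤ y) : AlmostDPSet (Set.Icc x y) := by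
  intro f hd hw
  have hu : 0 ≤ y - x := sub_nonneg.2 hxy
  have hx : Tendsto (fun n => |f n x|) atTop (𝓝 0) := by
    simpa using (hw (ContinuousLinearMap.apply ℝ ℝ x)).abs
  refine squeeze_zero (fun n => Real.iSup_nonneg fun a => abs_nonneg _)
    (fun n => Real.iSup_le (fun a => abs_apply_le_of_mem_Icc (f n) a.2)
      (add_nonneg (abs_nonneg _) (absEval_nonneg _ hu))) ?_
  simpa using hx.add (tendsto_absEval_of_disjoint_weaklyNull hd hw hu)

/-- Every order interval in a Banach lattice is an almost Dunford-Pettis set. -/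
theorem orderInterval_almostDP [NormedAddCommGroup E] [Lattice E] [HasSolidNorm E] [IsOrderedAddMonoid E] [NormedSpace ℝ E] [PosSMulStrictMono ℝ E] [PosSMulReflectLT ℝ E] [CompleteSpace E]
    (x y : E) (hxy : x ≤ y) : AlmostDPSet (Set.Icc x y) :=
  orderInterval_almostDP_general x y hxy
end

section
/- If the bidual E** of a Banach lattice E has order continuous norm, then every almost weakly limited operator from a Banach space X into E is almost limited. -/
/-!
The dual `E*` of a normed lattice, ordered by its positive cone, is again a normed lattice:
`f⁺ x = sup f([0, x])` for `x ≥ 0` (Riesz–Kantorovich), and the dual norm is solid. Hence so is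
`E**`, and `|φ f| ≤ |φ| |f|` for `φ ∈ E**`, `f ∈ E*`.

Let `(fₙ)` be a disjoint weak* null sequence in `E*`; it is bounded by Banach–Steinhaus. Let
`θₙ ≥ 0` be the component of `|φ|` in the band generated by `|fₙ|`. By disjointness,
`∑ₙ θₙ g ≤ |φ| g` for `g ≥ 0`, so the tails `Θ_N = ∑_{n ≥ N} θₙ` decrease to `0` in `E**`.
Order continuity of the norm of `E**` makes some `‖Θ_N‖` small, while
`Θ_N (|f_N|) ≥ θ_N (|f_N|) = |φ| (|f_N|)`. Applied to subsequences, this gives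
`|φ| (|fₙ|) → 0`, so `(fₙ)` is weakly null, and the almost Dunford–Pettis property of `T(B_X)`
yields uniform convergence of `(fₙ)` on it.
-/

open Filter Topology Pointwise

variable {E F G X : Type*}

variable [NormedAddCommGroup E] [Lattice E] [HasSolidNorm E] [IsOrderedAddMonoid E] [NormedSpace ℝ E] in
/-- A weak* null sequence of functionals. -/
def WeakStarNull (f : ℕ → E →L[ℝ] ℝ) : Prop :=
  ∀ x : E, Tendsto (fun n => f n x) atTop (𝓝 0)

variable [NormedAddCommGroup E] [Lattice E] [HasSolidNorm E] [IsOrderedAddMonoid E] [NormedSpace ℝ E] in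
/-- An almost limited set: disjoint weak* null sequences in the dual converge uniformly
to zero on it. -/
def AlmostLimitedSet (A : Set E) : Prop :=
  ∀ f : ℕ → E →L[ℝ] ℝ, DisjointSeqDual f → WeakStarNull f →
    Tendsto (fun n => ⨆ a : A, |f n a.1|) atTop (𝓝 0)

variable [NormedAddCommGroup E] [Lattice E] [HasSolidNorm E] [IsOrderedAddMonoid E] [NormedSpace ℝ E] in
/-- A positive functional. -/
def PositiveFunctional (f : E →L[ℝ] ℝ) : Prop := ∀ x : E, 0 ≤ x → 0 ≤ f x

variable [NormedAddCommGroup E] [Lattice E] [HasSolidNorm E] [IsOrderedAddMonoid E] [NormedSpace ℝ E] in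
/-- The canonical (pre)order on the bidual, induced by the positive cone of the dual. -/
def BidualLe (Φ Ψ : (E →L[ℝ] ℝ) →L[ℝ] ℝ) : Prop :=
  ∀ f : E →L[ℝ] ℝ, PositiveFunctional f → Φ f ≤ Ψ f

/-- Order continuity of the norm of the bidual: every nonempty downward directed subset
of the bidual whose greatest lower bound is `0` contains elements of arbitrarily small
norm. -/
def BidualOrderContinuousNorm (E : Type*) [NormedAddCommGroup E] [Lattice E] [HasSolidNorm E] [IsOrderedAddMonoid E]
    [NormedSpace ℝ E] : Prop :=
  ∀ S : Set ((E →L[ℝ] ℝ) →L[ℝ] ℝ), S.Nonempty →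
    DirectedOn (fun Φ Ψ => BidualLe Ψ Φ) S →
    (∀ Φ ∈ S, BidualLe 0 Φ) →
    (∀ Ψ, (∀ Φ ∈ S, BidualLe Ψ Φ) → BidualLe Ψ 0) →
    ∀ ε > 0, ∃ Φ ∈ S, ‖Φ‖ < ε

section LatticeOrderedGroup

variable {α : Type*} [Lattice α] [AddCommGroup α] [IsOrderedAddMonoid α]

theorem Set.Icc_zero_add_Icc_zero {x y : α} (hx : 0 ≤ x) (hy : 0 ≤ y) :
    Set.Icc 0 x + Set.Icc 0 y = Set.Icc 0 (x + y) := by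
  refine subset_antisymm ?_ fun z hz => ?_
  · rintro _ ⟨a, ⟨ha0, hax⟩, b, ⟨hb0, hby⟩, rfl⟩
    exact ⟨add_nonneg ha0 hb0, add_le_add hax hby⟩
  · -- Riesz decomposition: `z = z ⊓ x + (z - z ⊓ x)`.
    refine ⟨z ⊓ x, ⟨le_inf hz.1 hx, inf_le_right⟩, z - z ⊓ x, ⟨?_, ?_⟩, add_sub_cancel _ _⟩
    · exact sub_nonneg.2 inf_le_left
    · rw [inf_comm, sub_inf, sub_self]
      exact sup_le (sub_le_iff_le_add'.2 hz.2) hy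

theorem add_inf_le_inf_add_inf {a b c : α} (ha : 0 ≤ a) (hb : 0 ≤ b) (hc : 0 ≤ c) :
    (a + b) ⊓ c ≤ a ⊓ c + b ⊓ c := by
  set d := (a + b) ⊓ c
  have hda : d - b ≤ a ⊓ c :=
    le_inf (sub_le_iff_le_add.2 inf_le_left) ((sub_le_self _ hb).trans inf_le_right)
  have hdb : d - a ⊓ c ≤ b ⊓ c :=
    le_inf (sub_le_comm.1 hda) ((sub_le_self _ (le_inf ha hc)).trans inf_le_right)
  exact sub_le_iff_le_add'.1 hdb

theorem add_inf_eq_zero {a b c : α} (ha : 0 ≤ a) (hb : 0 ≤ b) (hc : 0 ≤ c)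
    (hac : a ⊓ c = 0) (hbc : b ⊓ c = 0) : (a + b) ⊓ c = 0 :=
  le_antisymm (by simpa [hac, hbc] using add_inf_le_inf_add_inf ha hb hc)
    (le_inf (add_nonneg ha hb) hc)

theorem nsmul_inf_eq_zero {a b : α} (ha : 0 ≤ a) (hb : 0 ≤ b) (hab : a ⊓ b = 0) (n : ℕ) :
    n • a ⊓ b = 0 := by
  induction n with
  | zero => simpa using inf_eq_left.2 hb
  | succ n ih => rw [succ_nsmul]; exact add_inf_eq_zero (nsmul_nonneg ha n) ha hb ih hab

theorem nsmul_inf_nsmul_eq_zero {a b : α} (ha : 0 ≤ a) (hb : 0 ≤ b) (hab : a ⊓ b = 0)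
    (m n : ℕ) : m • a ⊓ n • b = 0 := by
  have hma : b ⊓ m • a = 0 := by rw [inf_comm]; exact nsmul_inf_eq_zero ha hb hab m
  rw [inf_comm]
  exact nsmul_inf_eq_zero hb (nsmul_nonneg ha m) hma n

theorem Finset.sum_inf_eq_zero {ι : Type*} {s : Finset ι} {c : ι → α} {b : α}
    (hc : ∀ i ∈ s, 0 ≤ c i) (hb : 0 ≤ b) (hcb : ∀ i ∈ s, c i ⊓ b = 0) :
    (∑ i ∈ s, c i) ⊓ b = 0 := by
  classical
  induction s using Finset.induction_on with
  | empty => simpa using inf_eq_left.2 hb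
  | insert i s hi ih =>
    have hs : ∀ j ∈ s, j ∈ insert i s := fun j hj => Finset.mem_insert_of_mem hj
    rw [Finset.sum_insert hi]
    exact add_inf_eq_zero (hc i (s.mem_insert_self i))
      (Finset.sum_nonneg fun j hj => hc j (hs j hj)) hb (hcb i (s.mem_insert_self i))
      (ih (fun j hj => hc j (hs j hj)) fun j hj => hcb j (hs j hj))

theorem Finset.sum_le_of_pairwise_inf_eq_zero {ι : Type*} {s : Finset ι} {c : ι → α} {g : α}
    (hc : ∀ i ∈ s, 0 ≤ c i) (hcg : ∀ i ∈ s, c i ≤ g)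
    (hdisj : (s : Set ι).Pairwise fun i j => c i ⊓ c j = 0) (hg : 0 ≤ g) :
    ∑ i ∈ s, c i ≤ g := by
  classical
  induction s using Finset.induction_on with
  | empty => simpa using hg
  | insert i s hi ih =>
    have hs : ∀ j ∈ s, j ∈ insert i s := fun j hj => Finset.mem_insert_of_mem hj
    have hS : (∑ j ∈ s, c j) ⊓ c i = 0 := Finset.sum_inf_eq_zero (fun j hj => hc j (hs j hj))
      (hc i (s.mem_insert_self i)) fun j hj =>
        hdisj (hs j hj) (s.mem_insert_self i) (ne_of_mem_of_not_mem hj hi)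
    -- disjoint elements satisfy `a + b = a ⊔ b`
    rw [Finset.sum_insert hi, ← inf_add_sup, inf_comm, hS, zero_add]
    exact sup_le (hcg i (s.mem_insert_self i))
      (ih (fun j hj => hc j (hs j hj)) (fun j hj => hcg j (hs j hj))
        (hdisj.mono (Finset.coe_subset.2 (s.subset_insert i))))

theorem map_posPart_sub_map_negPart_add {F : α → ℝ}
    (hadd : ∀ x y, 0 ≤ x → 0 ≤ y → F (x + y) = F x + F y) (x y : α) :
    F (x + y)⁺ - F (x + y)⁻ = (F x⁺ - F x⁻) + (F y⁺ - F y⁻) := by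
  have key : (x + y)⁺ + (x⁻ + y⁻) = (x + y)⁻ + (x⁺ + y⁺) := by
    have h : (x + y)⁺ - (x + y)⁻ = (x⁺ - x⁻) + (y⁺ - y⁻) := by
      simp only [posPart_sub_negPart]
    rw [← sub_eq_zero] at h ⊢
    rw [← h]
    abel
  have hF := congrArg F key
  simp only [hadd _ _ (posPart_nonneg _) (add_nonneg (negPart_nonneg _) (negPart_nonneg _)),
    hadd _ _ (negPart_nonneg _) (add_nonneg (posPart_nonneg _) (posPart_nonneg _)),
    hadd _ _ (negPart_nonneg x) (negPart_nonneg y),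
    hadd _ _ (posPart_nonneg x) (posPart_nonneg y)] at hF
  linarith

end LatticeOrderedGroup

section NormedLattice

variable [NormedAddCommGroup E] [Lattice E] [HasSolidNorm E] [IsOrderedAddMonoid E]

theorem norm_le_norm_of_nonneg_of_le {x y : E} (hx : 0 ≤ x) (hxy : x ≤ y) : ‖x‖ ≤ ‖y‖ :=
  norm_le_norm_of_abs_le_abs (abs_le_abs_of_nonneg hx hxy)

theorem norm_le_norm_of_abs_le {x y : E} (h : |y| ≤ x) : ‖y‖ ≤ ‖x‖ := by
  rw [← norm_abs_eq_norm y]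
  exact norm_le_norm_of_nonneg_of_le (abs_nonneg y) h

theorem norm_posPart_le (x : E) : ‖x⁺‖ ≤ ‖x‖ := by
  rw [← norm_abs_eq_norm x]
  exact norm_le_norm_of_nonneg_of_le (posPart_nonneg x) (sup_le (le_abs_self x) (abs_nonneg x))

theorem norm_negPart_le (x : E) : ‖x⁻‖ ≤ ‖x‖ := by
  simpa [posPart_neg] using norm_posPart_le (-x)

end NormedLattice

namespace LatticeDual

section Order

variable [NormedAddCommGroup E] [Lattice E] [IsOrderedAddMonoid E] [NormedSpace ℝ E]

instance instPartialOrder : PartialOrder (E →L[ℝ] ℝ) where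
  le f g := ∀ x, 0 ≤ x → f x ≤ g x
  le_refl _ _ _ := le_rfl
  le_trans _ _ _ hfg hgh x hx := (hfg x hx).trans (hgh x hx)
  le_antisymm f g hfg hgf := by
    ext x
    rw [← posPart_sub_negPart x, map_sub, map_sub,
      le_antisymm (hfg _ (posPart_nonneg x)) (hgf _ (posPart_nonneg x)),
      le_antisymm (hfg _ (negPart_nonneg x)) (hgf _ (negPart_nonneg x))]

instance instIsOrderedAddMonoid : IsOrderedAddMonoid (E →L[ℝ] ℝ) where
  add_le_add_left f g hfg h x hx := by simpa using add_le_add_right (hfg x hx) (h x)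

end Order

section NormedLatticeDual

variable [NormedAddCommGroup E] [Lattice E] [HasSolidNorm E] [IsOrderedAddMonoid E]
  [NormedSpace ℝ E]

noncomputable def ofCone (F : E → ℝ) (hadd : ∀ x y, 0 ≤ x → 0 ≤ y → F (x + y) = F x + F y)
    (C : ℝ) (hC : 0 ≤ C) (hFC : ∀ x, 0 ≤ x → |F x| ≤ C * ‖x‖) : E →L[ℝ] ℝ :=
  let Fₗ : E →+ ℝ :=
    AddMonoidHom.mk' (fun x => F x⁺ - F x⁻) (map_posPart_sub_map_negPart_add hadd)
  Fₗ.toRealLinearMap <| AddMonoidHomClass.continuous_of_bound Fₗ (2 * C) fun x => by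
    calc |F x⁺ - F x⁻| ≤ |F x⁺| + |F x⁻| := abs_sub _ _
      _ ≤ C * ‖x‖ + C * ‖x‖ := add_le_add
          ((hFC _ (posPart_nonneg x)).trans (by gcongr; exact norm_posPart_le x))
          ((hFC _ (negPart_nonneg x)).trans (by gcongr; exact norm_negPart_le x))
      _ = 2 * C * ‖x‖ := by ring

theorem ofCone_apply {F : E → ℝ} {hadd : ∀ x y, 0 ≤ x → 0 ≤ y → F (x + y) = F x + F y}
    {C : ℝ} {hC : 0 ≤ C} {hFC : ∀ x, 0 ≤ x → |F x| ≤ C * ‖x‖} {x : E} (hx : 0 ≤ x) :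
    ofCone F hadd C hC hFC x = F x := by
  change F x⁺ - F x⁻ = F x
  have hF0 : F 0 = 0 := by simpa using hadd 0 0 le_rfl le_rfl
  rw [posPart_of_nonneg hx, negPart_of_nonneg hx, hF0, sub_zero]

section RieszKantorovich

variable (f : E →L[ℝ] ℝ)

noncomputable def supIcc (x : E) : ℝ := sSup (f '' Set.Icc 0 x)

theorem apply_le_of_abs_le {x y : E} (h : |y| ≤ x) : f y ≤ ‖f‖ * ‖x‖ :=
  (le_abs_self _).trans <| (f.le_opNorm y).trans <|
    mul_le_mul_of_nonneg_left (norm_le_norm_of_abs_le h) (norm_nonneg f)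

theorem apply_le_of_mem_Icc {x y : E} (hy : y ∈ Set.Icc 0 x) : f y ≤ ‖f‖ * ‖x‖ :=
  apply_le_of_abs_le f ((abs_of_nonneg hy.1).trans_le hy.2)

theorem bddAbove_image_Icc (x : E) : BddAbove (f '' Set.Icc 0 x) :=
  ⟨‖f‖ * ‖x‖, Set.forall_mem_image.2 fun _ hy => apply_le_of_mem_Icc f hy⟩

theorem le_supIcc {x y : E} (hy : y ∈ Set.Icc 0 x) : f y ≤ supIcc f x :=
  le_csSup (bddAbove_image_Icc f x) (Set.mem_image_of_mem f hy)

variable {f}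

omit [HasSolidNorm E] [IsOrderedAddMonoid E] in
theorem supIcc_le {x : E} (hx : 0 ≤ x) {c : ℝ} (h : ∀ y ∈ Set.Icc 0 x, f y ≤ c) :
    supIcc f x ≤ c :=
  csSup_le ((Set.nonempty_Icc.2 hx).image f) (Set.forall_mem_image.2 h)

theorem supIcc_nonneg {x : E} (hx : 0 ≤ x) : 0 ≤ supIcc f x := by
  simpa using le_supIcc f ⟨le_rfl, hx⟩

theorem supIcc_add {x y : E} (hx : 0 ≤ x) (hy : 0 ≤ y) :
    supIcc f (x + y) = supIcc f x + supIcc f y := by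
  rw [supIcc, ← Set.Icc_zero_add_Icc_zero hx hy, Set.image_add]
  exact csSup_add ((Set.nonempty_Icc.2 hx).image f) (bddAbove_image_Icc f x)
    ((Set.nonempty_Icc.2 hy).image f) (bddAbove_image_Icc f y)

theorem abs_supIcc_le {x : E} (hx : 0 ≤ x) : |supIcc f x| ≤ ‖f‖ * ‖x‖ := by
  rw [abs_of_nonneg (supIcc_nonneg hx)]
  exact supIcc_le hx fun _ hy => apply_le_of_mem_Icc f hy

variable (f)

/-- `f⁺`, by the Riesz–Kantorovich formula. -/
noncomputable def rieszPosPart : E →L[ℝ] ℝ :=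
  ofCone (supIcc f) (fun _ _ => supIcc_add) ‖f‖ (norm_nonneg f) fun _ => abs_supIcc_le

theorem rieszPosPart_apply {x : E} (hx : 0 ≤ x) : rieszPosPart f x = supIcc f x :=
  ofCone_apply hx

theorem le_rieszPosPart : f ≤ rieszPosPart f := fun x hx => by
  rw [rieszPosPart_apply f hx]
  exact le_supIcc f ⟨hx, le_rfl⟩

theorem rieszPosPart_nonneg : 0 ≤ rieszPosPart f := fun x hx => by
  rw [rieszPosPart_apply f hx]
  exact supIcc_nonneg hx

variable {f}

theorem rieszPosPart_le {g : E →L[ℝ] ℝ} (hg : 0 ≤ g) (hfg : f ≤ g) : rieszPosPart f ≤ g :=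
  fun x hx => by
    rw [rieszPosPart_apply f hx]
    refine supIcc_le hx fun y hy => (hfg y hy.1).trans ?_
    simpa using hg (x - y) (sub_nonneg.2 hy.2)

end RieszKantorovich

noncomputable instance instLattice : Lattice (E →L[ℝ] ℝ) where
  sup f g := g + rieszPosPart (f - g)
  le_sup_left f g := sub_le_iff_le_add'.1 (le_rieszPosPart (f - g))
  le_sup_right _ _ := le_add_of_nonneg_right (rieszPosPart_nonneg _)
  sup_le _ g _ hf hg :=
    add_le_of_le_sub_left (rieszPosPart_le (sub_nonneg.2 hg) (sub_le_sub_right hf g))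
  inf f g := f - rieszPosPart (f - g)
  inf_le_left _ _ := sub_le_self _ (rieszPosPart_nonneg _)
  inf_le_right _ _ := sub_le_comm.1 (le_rieszPosPart _)
  le_inf _ f _ hf hg :=
    le_sub_comm.1 (rieszPosPart_le (sub_nonneg.2 hf) (sub_le_sub_left hg f))

section Abs

variable (f : E →L[ℝ] ℝ)

theorem bddAbove_range_absEval (x : E) :
    BddAbove (Set.range fun y : {y : E // |y| ≤ x} => f y.1) :=
  ⟨‖f‖ * ‖x‖, Set.forall_mem_range.2 fun y => apply_le_of_abs_le f y.2⟩

theorem absEval_le {x : E} (hx : 0 ≤ x) : absEval f x ≤ ‖f‖ * ‖x‖ := by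
  have : Nonempty {y : E // |y| ≤ x} := ⟨⟨0, by simpa using hx⟩⟩
  exact ciSup_le fun y => apply_le_of_abs_le f y.2

/-- For `0 ≤ z ≤ x` we have `|2z - x| ≤ x`, and `|f| x = sup f(2z - x)` over such `z`. -/
theorem abs_apply_le_absEval {x : E} (hx : 0 ≤ x) : |f| x ≤ absEval f x := by
  have habs : |f| = -f + rieszPosPart (f - -f) := rfl
  rw [habs, add_apply, rieszPosPart_apply _ hx, neg_apply, neg_add_le_iff_le_add]
  refine supIcc_le hx fun z hz => ?_
  have hzx : |z + z - x| ≤ x := by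
    refine abs_le'.2 ⟨sub_le_iff_le_add.2 (add_le_add hz.2 hz.2), ?_⟩
    rw [neg_sub]
    exact sub_le_self x (add_nonneg hz.1 hz.1)
  calc (f - -f) z = f x + f (z + z - x) := by simp
    _ ≤ f x + absEval f x := by gcongr; exact le_ciSup (bddAbove_range_absEval f x) ⟨_, hzx⟩

theorem abs_apply_le_apply_abs (x : E) : |f x| ≤ |f| |x| := by
  have h₁ := le_abs_self f x⁺ (posPart_nonneg x)
  have h₂ := le_abs_self f x⁻ (negPart_nonneg x)
  have h₃ := neg_le_abs f x⁺ (posPart_nonneg x)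
  have h₄ := neg_le_abs f x⁻ (negPart_nonneg x)
  simp only [neg_apply] at h₃ h₄
  rw [← posPart_add_negPart x, map_add]
  nth_rw 1 [← posPart_sub_negPart x]
  rw [map_sub]
  exact abs_le.2 ⟨by linarith, by linarith⟩

theorem opNorm_le_of_nonneg {u : E →L[ℝ] ℝ} (hu : 0 ≤ u) {C : ℝ} (hC : 0 ≤ C)
    (h : ∀ x, 0 ≤ x → u x ≤ C * ‖x‖) : ‖u‖ ≤ C :=
  u.opNorm_le_bound hC fun x =>
    calc ‖u x‖ ≤ |u| |x| := abs_apply_le_apply_abs u x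
      _ = u |x| := by rw [abs_of_nonneg hu]
      _ ≤ C * ‖x‖ := by simpa only [norm_abs_eq_norm] using h |x| (abs_nonneg x)

theorem norm_abs_le_norm : ‖|f|‖ ≤ ‖f‖ :=
  opNorm_le_of_nonneg (abs_nonneg f) (norm_nonneg f) fun _ hx =>
    (abs_apply_le_absEval f hx).trans (absEval_le f hx)

theorem norm_le_norm_abs : ‖f‖ ≤ ‖|f|‖ :=
  f.opNorm_le_bound (norm_nonneg _) fun x =>
    calc ‖f x‖ ≤ |f| |x| := abs_apply_le_apply_abs f x
      _ ≤ ‖|f|‖ * ‖x‖ := by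
        simpa only [norm_abs_eq_norm] using (le_abs_self _).trans ((|f|).le_opNorm |x|)

end Abs

instance instHasSolidNorm : HasSolidNorm (E →L[ℝ] ℝ) where
  solid f g hfg := (norm_le_norm_abs f).trans <| (norm_abs_le_norm g).trans' <|
    opNorm_le_of_nonneg (abs_nonneg f) (norm_nonneg _) fun x hx =>
      (hfg x hx).trans <| (le_abs_self _).trans ((|g|).le_opNorm x)

end NormedLatticeDual

section Band

variable [NormedAddCommGroup F] [Lattice F] [IsOrderedAddMonoid F]
  [NormedSpace ℝ F] {Φ : F →L[ℝ] ℝ}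

theorem apply_mono (hΦ : 0 ≤ Φ) {x y : F} (hxy : x ≤ y) : Φ x ≤ Φ y := by
  simpa using hΦ (y - x) (sub_nonneg.2 hxy)

variable (Φ) in
/-- At `g ≥ 0`, the value of the component of `Φ` in the band generated by `h`. -/
noncomputable def bandSup (h g : F) : ℝ := ⨆ m : ℕ, Φ (g ⊓ m • h)

variable (hΦ : 0 ≤ Φ) {h : F} (hh : 0 ≤ h)
include hΦ

theorem bddAbove_range_apply_inf_nsmul (g : F) :
    BddAbove (Set.range fun m : ℕ => Φ (g ⊓ m • h)) :=
  ⟨Φ g, Set.forall_mem_range.2 fun _ => apply_mono hΦ inf_le_left⟩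

theorem le_bandSup (g : F) (m : ℕ) : Φ (g ⊓ m • h) ≤ bandSup Φ h g :=
  le_ciSup (bddAbove_range_apply_inf_nsmul hΦ g) m

theorem bandSup_le_apply (g : F) : bandSup Φ h g ≤ Φ g :=
  ciSup_le fun _ => apply_mono hΦ inf_le_left

include hh

theorem tendsto_bandSup {g : F} :
    Tendsto (fun m : ℕ => Φ (g ⊓ m • h)) atTop (𝓝 (bandSup Φ h g)) :=
  tendsto_atTop_ciSup
    (fun _ _ hmn => apply_mono hΦ (inf_le_inf_left g (nsmul_le_nsmul_left hh hmn)))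
    (bddAbove_range_apply_inf_nsmul hΦ g)

theorem bandSup_nonneg {g : F} (hg : 0 ≤ g) : 0 ≤ bandSup Φ h g :=
  (hΦ _ (le_inf hg (nsmul_nonneg hh 0))).trans (le_bandSup hΦ g 0)

theorem bandSup_add {g₁ g₂ : F} (hg₁ : 0 ≤ g₁) (hg₂ : 0 ≤ g₂) :
    bandSup Φ h (g₁ + g₂) = bandSup Φ h g₁ + bandSup Φ h g₂ := by
  refine le_antisymm (ciSup_le fun m => ?_) (ciSup_add_ciSup_le fun m₁ m₂ => ?_)
  · calc Φ ((g₁ + g₂) ⊓ m • h) ≤ Φ (g₁ ⊓ m • h + g₂ ⊓ m • h) :=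
          apply_mono hΦ (add_inf_le_inf_add_inf hg₁ hg₂ (nsmul_nonneg hh m))
      _ ≤ bandSup Φ h g₁ + bandSup Φ h g₂ := by
          rw [map_add]; exact add_le_add (le_bandSup hΦ g₁ m) (le_bandSup hΦ g₂ m)
  · calc Φ (g₁ ⊓ m₁ • h) + Φ (g₂ ⊓ m₂ • h) = Φ (g₁ ⊓ m₁ • h + g₂ ⊓ m₂ • h) :=
          (map_add ..).symm
      _ ≤ Φ ((g₁ + g₂) ⊓ (m₁ + m₂) • h) := apply_mono hΦ <| le_inf
          (add_le_add inf_le_left inf_le_left)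
          (by rw [add_nsmul]; exact add_le_add inf_le_right inf_le_right)
      _ ≤ bandSup Φ h (g₁ + g₂) := le_bandSup hΦ _ _

theorem abs_bandSup_le {g : F} (hg : 0 ≤ g) : |bandSup Φ h g| ≤ ‖Φ‖ * ‖g‖ := by
  rw [abs_of_nonneg (bandSup_nonneg hΦ hh hg)]
  exact (bandSup_le_apply hΦ g).trans ((le_abs_self _).trans (Φ.le_opNorm g))

variable [HasSolidNorm F]

noncomputable def bandComponent : F →L[ℝ] ℝ :=
  ofCone (bandSup Φ h) (fun _ _ => bandSup_add hΦ hh) ‖Φ‖ (norm_nonneg Φ)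
    fun _ => abs_bandSup_le hΦ hh

theorem bandComponent_apply {g : F} (hg : 0 ≤ g) : bandComponent hΦ hh g = bandSup Φ h g :=
  ofCone_apply hg

theorem bandComponent_nonneg : 0 ≤ bandComponent hΦ hh := fun g hg => by
  rw [bandComponent_apply hΦ hh hg]
  exact bandSup_nonneg hΦ hh hg

theorem bandComponent_le : bandComponent hΦ hh ≤ Φ := fun g hg => by
  rw [bandComponent_apply hΦ hh hg]
  exact bandSup_le_apply hΦ g

theorem bandComponent_self : bandComponent hΦ hh h = Φ h := by
  refine le_antisymm (bandComponent_le hΦ hh h hh) ?_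
  rw [bandComponent_apply hΦ hh hh]
  simpa using le_bandSup (h := h) hΦ h 1

end Band

section Tail

variable [NormedAddCommGroup F] [Lattice F] [HasSolidNorm F] [IsOrderedAddMonoid F]
  [NormedSpace ℝ F] {Φ : F →L[ℝ] ℝ} (hΦ : 0 ≤ Φ)
include hΦ

theorem sum_bandComponent_le {ι : Type*} {h : ι → F} (hh : ∀ i, 0 ≤ h i)
    (hdisj : Pairwise fun i j => h i ⊓ h j = 0) (s : Finset ι) {g : F} (hg : 0 ≤ g) :
    ∑ i ∈ s, bandComponent hΦ (hh i) g ≤ Φ g := by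
  have hlim : Tendsto (fun m : ℕ => ∑ i ∈ s, Φ (g ⊓ m • h i)) atTop
      (𝓝 (∑ i ∈ s, bandComponent hΦ (hh i) g)) := tendsto_finsetSum s fun i _ => by
    rw [bandComponent_apply hΦ (hh i) hg]
    exact tendsto_bandSup hΦ (hh i)
  refine le_of_tendsto' hlim fun m => ?_
  have hdisj_m : (s : Set ι).Pairwise fun i j => g ⊓ m • h i ⊓ (g ⊓ m • h j) = 0 :=
    fun i _ j _ hij => le_antisymm
      ((inf_le_inf inf_le_right inf_le_right).trans_eq
        (nsmul_inf_nsmul_eq_zero (hh i) (hh j) (hdisj hij) m m))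
      (le_inf (le_inf hg (nsmul_nonneg (hh i) m)) (le_inf hg (nsmul_nonneg (hh j) m)))
  rw [← map_sum]
  exact apply_mono hΦ <| Finset.sum_le_of_pairwise_inf_eq_zero
    (fun i _ => le_inf hg (nsmul_nonneg (hh i) m)) (fun _ _ => inf_le_left) hdisj_m hg

variable {h : ℕ → F} (hh : ∀ n, 0 ≤ h n) (hdisj : Pairwise fun m n => h m ⊓ h n = 0)
include hdisj

theorem summable_bandComponent (N : ℕ) {g : F} (hg : 0 ≤ g) :
    Summable fun k => bandComponent hΦ (hh (k + N)) g :=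
  summable_of_sum_range_le (fun k => bandComponent_nonneg hΦ (hh (k + N)) g hg) fun _ =>
    sum_bandComponent_le hΦ (fun k => hh (k + N))
      (hdisj.comp_of_injective (add_left_injective N)) _ hg

theorem tsum_bandComponent_le (N : ℕ) {g : F} (hg : 0 ≤ g) :
    ∑' k, bandComponent hΦ (hh (k + N)) g ≤ Φ g :=
  Real.tsum_le_of_sum_range_le (fun k => bandComponent_nonneg hΦ (hh (k + N)) g hg) fun _ =>
    sum_bandComponent_le hΦ (fun k => hh (k + N))
      (hdisj.comp_of_injective (add_left_injective N)) _ hg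

noncomputable def bandTail (N : ℕ) : F →L[ℝ] ℝ :=
  ofCone (fun g => ∑' k, bandComponent hΦ (hh (k + N)) g)
    (fun g₁ g₂ hg₁ hg₂ => by
      simp only [map_add]
      exact (summable_bandComponent hΦ hh hdisj N hg₁).tsum_add
        (summable_bandComponent hΦ hh hdisj N hg₂))
    ‖Φ‖ (norm_nonneg Φ) fun g hg => by
      rw [abs_of_nonneg (tsum_nonneg fun k => bandComponent_nonneg hΦ (hh (k + N)) g hg)]
      exact (tsum_bandComponent_le hΦ hh hdisj N hg).trans
        ((le_abs_self _).trans (Φ.le_opNorm g))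

theorem bandTail_apply (N : ℕ) {g : F} (hg : 0 ≤ g) :
    bandTail hΦ hh hdisj N g = ∑' k, bandComponent hΦ (hh (k + N)) g :=
  ofCone_apply hg

theorem bandTail_nonneg (N : ℕ) : 0 ≤ bandTail hΦ hh hdisj N := fun g hg => by
  rw [bandTail_apply hΦ hh hdisj N hg]
  exact tsum_nonneg fun k => bandComponent_nonneg hΦ (hh (k + N)) g hg

theorem bandTail_antitone : Antitone (bandTail hΦ hh hdisj) := fun N N' hNN' g hg => by
  rw [bandTail_apply hΦ hh hdisj N hg, bandTail_apply hΦ hh hdisj N' hg]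
  refine (summable_bandComponent hΦ hh hdisj N' hg).tsum_le_tsum_of_inj (· + (N' - N))
    (add_left_injective _) (fun k _ => bandComponent_nonneg hΦ (hh (k + N)) g hg)
    (fun k => le_of_eq ?_) (summable_bandComponent hΦ hh hdisj N hg)
  rw [show k + (N' - N) + N = k + N' by omega]

theorem tendsto_bandTail {g : F} (hg : 0 ≤ g) :
    Tendsto (fun N => bandTail hΦ hh hdisj N g) atTop (𝓝 0) := by
  simp only [bandTail_apply hΦ hh hdisj _ hg]
  exact tendsto_sum_nat_add fun n => bandComponent hΦ (hh n) g

theorem apply_le_bandTail (N : ℕ) : Φ (h N) ≤ bandTail hΦ hh hdisj N (h N) := by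
  rw [bandTail_apply hΦ hh hdisj N (hh N)]
  refine le_of_eq_of_le ?_ ((summable_bandComponent hΦ hh hdisj N (hh N)).le_tsum 0
    fun k _ => bandComponent_nonneg hΦ (hh (k + N)) _ (hh N))
  simp [bandComponent_self]

end Tail

end LatticeDual

section Bidual

variable [NormedAddCommGroup E] [Lattice E] [HasSolidNorm E] [IsOrderedAddMonoid E]
  [NormedSpace ℝ E]

open LatticeDual

namespace BidualOrderContinuousNorm

variable (hE : BidualOrderContinuousNorm E) {Φ : (E →L[ℝ] ℝ) →L[ℝ] ℝ} (hΦ : 0 ≤ Φ)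
  {h : ℕ → E →L[ℝ] ℝ} (hh : ∀ n, 0 ≤ h n) (hdisj : Pairwise fun m n => h m ⊓ h n = 0)
  {M : ℝ} (hM : ∀ n, ‖h n‖ ≤ M)
include hE hΦ hh hdisj hM

/-- The band tails of `Φ` along `h` decrease to `0`, so some tail has small norm, while the
`N`-th tail still sees all of `Φ (h N)`. -/
theorem exists_apply_lt {ε : ℝ} (hε : 0 < ε) : ∃ N, Φ (h N) < ε := by
  have hM₀ : 0 ≤ M := (norm_nonneg _).trans (hM 0)
  have hinf : ∀ Ψ, (∀ Θ ∈ Set.range (bandTail hΦ hh hdisj), BidualLe Ψ Θ) → BidualLe Ψ 0 :=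
    fun Ψ hΨ g hg => ge_of_tendsto' (tendsto_bandTail hΦ hh hdisj hg) fun N => hΨ _ ⟨N, rfl⟩ g hg
  obtain ⟨_, ⟨N, rfl⟩, hN⟩ := hE _ (Set.range_nonempty _)
    (directedOn_range.2 (bandTail_antitone hΦ hh hdisj).directed_ge)
    (Set.forall_mem_range.2 (bandTail_nonneg hΦ hh hdisj)) hinf (ε / (M + 1)) (by positivity)
  refine ⟨N, ?_⟩
  calc Φ (h N) ≤ bandTail hΦ hh hdisj N (h N) := apply_le_bandTail hΦ hh hdisj N
    _ ≤ ‖bandTail hΦ hh hdisj N‖ * ‖h N‖ :=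
        (le_abs_self _).trans ((bandTail hΦ hh hdisj N).le_opNorm _)
    _ ≤ ε / (M + 1) * M := mul_le_mul hN.le (hM N) (norm_nonneg _) (by positivity)
    _ < ε := by rw [div_mul_eq_mul_div, div_lt_iff₀ (by positivity)]; nlinarith

theorem tendsto_apply : Tendsto (fun n => Φ (h n)) atTop (𝓝 0) := by
  refine tendsto_order.2 ⟨fun a ha => Eventually.of_forall fun n => ha.trans_le (hΦ _ (hh n)),
    fun ε hε => ?_⟩
  by_contra hfreq
  obtain ⟨ρ, hρ, hρε⟩ := extraction_of_frequently_atTop (not_eventually.1 hfreq)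
  obtain ⟨N, hN⟩ := exists_apply_lt hE hΦ (fun n => hh (ρ n))
    (hdisj.comp_of_injective hρ.injective) (fun n => hM (ρ n)) hε
  exact hρε N hN

end BidualOrderContinuousNorm

theorem BidualOrderContinuousNorm.weaklyNullSeq (hE : BidualOrderContinuousNorm E)
    {f : ℕ → E →L[ℝ] ℝ} (hdisj : Pairwise fun m n => |f m| ⊓ |f n| = 0) {M : ℝ}
    (hM : ∀ n, ‖f n‖ ≤ M) : WeaklyNullSeq f := fun φ =>
  squeeze_zero_norm (fun n => abs_apply_le_apply_abs φ (f n))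
    (hE.tendsto_apply (abs_nonneg φ) (fun n => abs_nonneg (f n)) hdisj
      fun n => (norm_abs_eq_norm (f n)).trans_le (hM n))

theorem DisjointPair.abs_inf_abs_eq_zero {f g : E →L[ℝ] ℝ} (hfg : DisjointPair f g) :
    |f| ⊓ |g| = 0 := by
  refine le_antisymm (fun x hx => ?_) (le_inf (abs_nonneg f) (abs_nonneg g))
  have : Nonempty {y : E // 0 ≤ y ∧ y ≤ x} := ⟨⟨0, le_rfl, hx⟩⟩
  rw [zero_apply, ← hfg x hx]
  refine le_ciInf fun ⟨y, hy₀, hyx⟩ => ?_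
  have hxy : 0 ≤ x - y := sub_nonneg.2 hyx
  calc (|f| ⊓ |g|) x = (|f| ⊓ |g|) y + (|f| ⊓ |g|) (x - y) := by
        rw [← map_add, add_sub_cancel]
    _ ≤ absEval f y + absEval g (x - y) := add_le_add
        ((inf_le_left (a := |f|) y hy₀).trans (abs_apply_le_absEval f hy₀))
        ((inf_le_right (a := |f|) _ hxy).trans (abs_apply_le_absEval g hxy))

end Bidual

theorem WeakStarNull.exists_norm_le [NormedAddCommGroup E] [NormedSpace ℝ E] [CompleteSpace E]
    {f : ℕ → E →L[ℝ] ℝ} (hf : WeakStarNull f) : ∃ M, ∀ n, ‖f n‖ ≤ M :=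
  banach_steinhaus fun x => ⟨_, fun n => (hf x).norm.bddAbove_range.some_mem ⟨n, rfl⟩⟩

theorem bidual_orderContinuous_almostWeaklyLimited_almostLimited_general [NormedAddCommGroup X] [NormedSpace ℝ X] [NormedAddCommGroup E] [Lattice E] [HasSolidNorm E] [IsOrderedAddMonoid E] [NormedSpace ℝ E] [CompleteSpace E]
    (hE : BidualOrderContinuousNorm E) (T : X →L[ℝ] E)
    (hT : AlmostDPSet (T '' Metric.closedBall 0 1)) :
    AlmostLimitedSet (T '' Metric.closedBall 0 1) := by
  intro f hdisj hf
  obtain ⟨M, hM⟩ := hf.exists_norm_le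
  exact hT f hdisj <| hE.weaklyNullSeq (fun m n hmn => (hdisj m n hmn).abs_inf_abs_eq_zero) hM

/-- If the bidual of `E` has order continuous norm, then every almost weakly limited
operator into `E` is almost limited. -/
theorem bidual_orderContinuous_almostWeaklyLimited_almostLimited [NormedAddCommGroup X] [NormedSpace ℝ X] [CompleteSpace X] [NormedAddCommGroup E] [Lattice E] [HasSolidNorm E] [IsOrderedAddMonoid E] [NormedSpace ℝ E] [PosSMulStrictMono ℝ E] [CompleteSpace E]
    (hE : BidualOrderContinuousNorm E) (T : X →L[ℝ] E)
    (hT : AlmostDPSet (T '' Metric.closedBall 0 1)) :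
    AlmostLimitedSet (T '' Metric.closedBall 0 1) :=
  bidual_orderContinuous_almostWeaklyLimited_almostLimited_general hE T hT
end

section
/- The set of order almost Dunford-Pettis operators from a Banach lattice E into a Banach lattice F is a norm closed vector subspace of the space L(E,F) of all bounded operators. -/
/-!
For `x ≥ 0` and a functional `f` on `F`, `T ↦ sup {|f (T y)| : -x ≤ y ≤ x}` is a seminorm on
`L(E,F)` bounded by `‖f‖ ‖x‖ ‖T‖`, since the norm is solid. A weakly null sequence `(f n)` is norm
bounded by the uniform boundedness principle, so the seminorms attached to the `f n` are uniformly
Lipschitz, and the operators on which they tend to zero form a closed subspace. The order almost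
Dunford-Pettis operators are the intersection of these subspaces over all `x ≥ 0` and all
disjoint weakly null `(f n)`.
-/

open Filter Topology Pointwise

variable {E F G X : Type*}

variable [NormedAddCommGroup E] [Lattice E] [HasSolidNorm E] [IsOrderedAddMonoid E] [NormedSpace ℝ E]
  [NormedAddCommGroup F] [Lattice F] [HasSolidNorm F] [IsOrderedAddMonoid F] [NormedSpace ℝ F] in
/-- An order almost Dunford-Pettis operator: the image of each order interval `[-x, x]`
is an almost Dunford-Pettis set. -/
def OrderAlmostDP (T : E →L[ℝ] F) : Prop :=
  ∀ x : E, 0 ≤ x → AlmostDPSet (T '' Set.Icc (-x) x)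

namespace Seminorm

variable {𝕜 V ι : Type*}

def tendstoZeroSubmodule [SeminormedRing 𝕜] [AddCommGroup V] [Module 𝕜 V]
    (p : ι → Seminorm 𝕜 V) (l : Filter ι) : Submodule 𝕜 V where
  carrier := {v | Tendsto (fun i => p i v) l (𝓝 0)}
  zero_mem' := by simpa using tendsto_const_nhds
  add_mem' {v w} hv hw :=
    squeeze_zero (fun i => apply_nonneg _ _) (fun i => map_add_le_add (p i) v w)
      (by simpa using hv.add hw)
  smul_mem' c v hv := by simpa [map_smul_eq_mul] using hv.const_mul ‖c‖

@[simp]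
theorem mem_tendstoZeroSubmodule [SeminormedRing 𝕜] [AddCommGroup V] [Module 𝕜 V]
    {p : ι → Seminorm 𝕜 V} {l : Filter ι} {v : V} :
    v ∈ tendstoZeroSubmodule p l ↔ Tendsto (fun i => p i v) l (𝓝 0) :=
  Iff.rfl

theorem isClosed_tendstoZeroSubmodule [SeminormedRing 𝕜] [SeminormedAddCommGroup V]
    [Module 𝕜 V] {p : ι → Seminorm 𝕜 V} {l : Filter ι} {C : ℝ}
    (hp : ∀ i v, p i v ≤ C * ‖v‖) : IsClosed (tendstoZeroSubmodule p l : Set V) := by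
  have hequi : Equicontinuous fun i => ⇑(p i) :=
    Metric.equicontinuous_of_continuity_modulus (C * ·)
      ((continuous_const_mul C).tendsto' 0 0 (mul_zero C)) _
      fun v w i => by
        rw [Real.dist_eq, dist_eq_norm]
        exact (abs_sub_map_le_sub _ _ _).trans (hp i _)
  exact hequi.isClosed_setOfPred_tendsto continuous_const

end Seminorm

theorem exists_norm_le_of_forall_bddAbove_norm_dual {𝕜 Y ι : Type*} [RCLike 𝕜]
    [NormedAddCommGroup Y] [NormedSpace 𝕜 Y] {y : ι → Y}
    (hy : ∀ φ : Y →L[𝕜] 𝕜, BddAbove (Set.range fun i => ‖φ (y i)‖)) :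
    ∃ M, ∀ i, ‖y i‖ ≤ M := by
  obtain ⟨M, hM⟩ := banach_steinhaus (g := fun i => NormedSpace.inclusionInDoubleDual 𝕜 Y (y i))
    fun φ => (hy φ).imp fun _ hC i => hC ⟨i, rfl⟩
  exact ⟨M, fun i => (NormedSpace.inclusionInDoubleDualLi 𝕜).norm_map (y i) ▸ hM i⟩

theorem norm_le_of_mem_Icc_neg [NormedAddCommGroup E] [Lattice E] [HasSolidNorm E]
    [IsOrderedAddMonoid E] {x y : E} (hy : y ∈ Set.Icc (-x) x) : ‖y‖ ≤ ‖x‖ :=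
  norm_le_norm_of_abs_le_abs ((abs_le'.2 ⟨hy.2, neg_le.1 hy.1⟩).trans (le_abs_self x))

section OrderInterval

variable [NormedAddCommGroup E] [Lattice E] [HasSolidNorm E] [IsOrderedAddMonoid E]
  [NormedSpace ℝ E] [NormedAddCommGroup F] [NormedSpace ℝ F]

theorem abs_apply_le_of_mem_Icc_neg (f : F →L[ℝ] ℝ) (T : E →L[ℝ] F) {x y : E}
    (hy : y ∈ Set.Icc (-x) x) : |f (T y)| ≤ ‖f‖ * ‖x‖ * ‖T‖ :=
  calc |f (T y)| = ‖(f ∘L T) y‖ := (Real.norm_eq_abs _).symm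
    _ ≤ ‖f ∘L T‖ * ‖y‖ := (f ∘L T).le_opNorm y
    _ ≤ ‖f‖ * ‖T‖ * ‖x‖ := by gcongr; exacts [f.opNorm_comp_le T, norm_le_of_mem_Icc_neg hy]
    _ = ‖f‖ * ‖x‖ * ‖T‖ := mul_right_comm _ _ _

theorem bddAbove_abs_apply_Icc_neg (f : F →L[ℝ] ℝ) (T : E →L[ℝ] F) (x : E) :
    BddAbove (Set.range fun y : Set.Icc (-x) x => |f (T y)|) :=
  ⟨‖f‖ * ‖x‖ * ‖T‖, by rintro _ ⟨y, rfl⟩; exact abs_apply_le_of_mem_Icc_neg f T y.2⟩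

noncomputable def orderIntervalSeminorm (f : F →L[ℝ] ℝ) (x : E) : Seminorm ℝ (E →L[ℝ] F) :=
  Seminorm.of (fun T => ⨆ y : Set.Icc (-x) x, |f (T y)|)
    (fun T S => Real.iSup_le
      (fun y => by
        rw [add_apply, map_add]
        exact (abs_add_le _ _).trans <| add_le_add
          (le_ciSup (bddAbove_abs_apply_Icc_neg f T x) y)
          (le_ciSup (bddAbove_abs_apply_Icc_neg f S x) y))
      (add_nonneg (Real.iSup_nonneg fun _ => abs_nonneg _)
        (Real.iSup_nonneg fun _ => abs_nonneg _)))
    (fun c T => by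
      simp only [smul_apply, map_smul, smul_eq_mul, abs_mul, Real.norm_eq_abs]
      exact (Real.mul_iSup_of_nonneg (abs_nonneg c) _).symm)

theorem orderIntervalSeminorm_apply (f : F →L[ℝ] ℝ) (x : E) (T : E →L[ℝ] F) :
    orderIntervalSeminorm f x T = ⨆ a : T '' Set.Icc (-x) x, |f a| := by
  show sSup _ = sSup _
  congr 1
  ext r
  simp

theorem orderIntervalSeminorm_le (f : F →L[ℝ] ℝ) (x : E) (T : E →L[ℝ] F) :
    orderIntervalSeminorm f x T ≤ ‖f‖ * ‖x‖ * ‖T‖ :=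
  Real.iSup_le (fun y => abs_apply_le_of_mem_Icc_neg f T y.2) (by positivity)

end OrderInterval

section OrderAlmostDP

variable [NormedAddCommGroup E] [Lattice E] [HasSolidNorm E] [IsOrderedAddMonoid E]
  [NormedSpace ℝ E] [NormedAddCommGroup F] [Lattice F] [NormedSpace ℝ F]

variable (E F) in
noncomputable def orderAlmostDPSubmodule : Submodule ℝ (E →L[ℝ] F) :=
  ⨅ (x : E) (_ : 0 ≤ x) (f : ℕ → F →L[ℝ] ℝ) (_ : DisjointSeqDual f) (_ : WeaklyNullSeq f),
    Seminorm.tendstoZeroSubmodule (fun n => orderIntervalSeminorm (f n) x) atTop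

theorem mem_orderAlmostDPSubmodule {T : E →L[ℝ] F} :
    T ∈ orderAlmostDPSubmodule E F ↔ OrderAlmostDP T := by
  simp only [orderAlmostDPSubmodule, Submodule.mem_iInf, Seminorm.mem_tendstoZeroSubmodule,
    orderIntervalSeminorm_apply, OrderAlmostDP, AlmostDPSet]

theorem isClosed_orderAlmostDPSubmodule :
    IsClosed (orderAlmostDPSubmodule E F : Set (E →L[ℝ] F)) := by
  simp only [orderAlmostDPSubmodule, Submodule.coe_iInf]
  refine isClosed_iInter fun x => isClosed_iInter fun _ => isClosed_iInter fun f =>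
    isClosed_iInter fun _ => isClosed_iInter fun hf => ?_
  obtain ⟨M, hM⟩ := exists_norm_le_of_forall_bddAbove_norm_dual fun φ => (hf φ).norm.bddAbove_range
  refine Seminorm.isClosed_tendstoZeroSubmodule (C := M * ‖x‖) fun n T => ?_
  calc orderIntervalSeminorm (f n) x T ≤ ‖f n‖ * ‖x‖ * ‖T‖ := orderIntervalSeminorm_le _ _ _
    _ ≤ M * ‖x‖ * ‖T‖ := by gcongr; exact hM n

end OrderAlmostDP

theorem orderAlmostDP_closed_subspace_general [NormedAddCommGroup E] [Lattice E] [HasSolidNorm E] [IsOrderedAddMonoid E] [NormedSpace ℝ E] [NormedAddCommGroup F] [Lattice F] [NormedSpace ℝ F] :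
    OrderAlmostDP (0 : E →L[ℝ] F) ∧
    (∀ T S : E →L[ℝ] F, OrderAlmostDP T → OrderAlmostDP S → OrderAlmostDP (T + S)) ∧
    (∀ (c : ℝ) (T : E →L[ℝ] F), OrderAlmostDP T → OrderAlmostDP (c • T)) ∧
    IsClosed {T : E →L[ℝ] F | OrderAlmostDP T} := by
  simp only [← mem_orderAlmostDPSubmodule]
  exact ⟨zero_mem _, fun _ _ => add_mem, fun c _ => Submodule.smul_mem _ c,
    isClosed_orderAlmostDPSubmodule⟩

/-- The order almost Dunford-Pettis operators form a norm closed vector subspace of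
`L(E,F)`. -/
theorem orderAlmostDP_closed_subspace [NormedAddCommGroup E] [Lattice E] [HasSolidNorm E] [IsOrderedAddMonoid E] [NormedSpace ℝ E] [PosSMulStrictMono ℝ E] [PosSMulReflectLT ℝ E] [CompleteSpace E] [NormedAddCommGroup F] [Lattice F] [HasSolidNorm F] [IsOrderedAddMonoid F] [NormedSpace ℝ F] [PosSMulStrictMono ℝ F] [PosSMulReflectLT ℝ F] [CompleteSpace F] :
    OrderAlmostDP (0 : E →L[ℝ] F) ∧
    (∀ T S : E →L[ℝ] F, OrderAlmostDP T → OrderAlmostDP S → OrderAlmostDP (T + S)) ∧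
    (∀ (c : ℝ) (T : E →L[ℝ] F), OrderAlmostDP T → OrderAlmostDP (c • T)) ∧
    IsClosed {T : E →L[ℝ] F | OrderAlmostDP T} :=
  orderAlmostDP_closed_subspace_general
end
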